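/- arXiv:2409.01165 — 4 statements merged into one kernel-verified Lean document; each statement's English description precedes it below -/
import Mathlib

section
/- Let f be a trigonometric polynomial (so f̂(n) = 0 for all but finitely many n ∈ ℤ), let ψ ∈ L₂ and j ∈ ℤ₊. Then Σ_{k∈R_j} |⟨f, S^k_j ψ⟩|² = 2^j Σ_{n∈R_j} |h_j(n)|², where h_j(n) := Σ_{q∈ℤ} f̂(2^j q + n) · conj(ψ̂(2^j q + n)). -/
open MeasureTheory Complex Finset Filter ComplexConjugate

noncomputable section

instance : Fact ((0:ℝ) < 1) := ⟨one_pos⟩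

/-- The space `L₂` of 1-periodic square-integrable complex functions, realized as
`Lp ℂ 2` over the additive circle of length 1 with normalized Haar measure. -/
abbrev PL2 : Type := Lp ℂ 2 (@AddCircle.haarAddCircle (1 : ℝ) _)

/-- Fourier coefficient `f̂(n) = ∫₀¹ f(x) e^{-2πinx} dx`. -/
def fCoeff (f : PL2) (n : ℤ) : ℂ := fourierCoeff (f : AddCircle (1 : ℝ) → ℂ) n

/-- Inner product `⟨f, S^k_j g⟩ = ∫₀¹ f(x) conj(g(x + 2^{-j} k)) dx`. -/
def shiftInner (f g : PL2) (j : ℕ) (k : ℤ) : ℂ :=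
  ∫ x : AddCircle (1 : ℝ),
    f x * conj (g (x + (((2:ℝ)^(-(j:ℤ)) * (k:ℝ) : ℝ) : AddCircle (1 : ℝ))))
    ∂AddCircle.haarAddCircle

/-- `R_j = {-2^{j-1}+1, …, 2^{j-1}}` for `j ≥ 1` and `R₀ = {0}`. -/
def Rset (j : ℕ) : Finset ℤ :=
  if j = 0 then {0} else Finset.Icc (-(2^(j-1) : ℤ) + 1) (2^(j-1))

/-- The system `{S^k_j ψ^m_j : j ∈ ℤ₊, 1 ≤ m ≤ ρ_j, k ∈ R_j}` is a Parseval wavelet frame. -/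
def IsParsevalFrame (ρ : ℕ → ℕ) (ψ : ℕ → ℕ → PL2) : Prop :=
  ∀ f : PL2, ‖f‖^2 =
    ∑' j : ℕ, ∑ m ∈ Finset.Icc 1 (ρ j), ∑ k ∈ Rset j,
      ‖shiftInner f (ψ j m) j k‖^2


/-!
Expanding the trigonometric polynomial `f` in its Fourier series, `⟨f, S^k_j ψ⟩` becomes
`∑ₙ f̂(n) conj(ψ̂(n)) e^{-2πink/2^j}`. The exponential only sees `n` and `k` modulo `N = 2^j`,
so grouping `n` by residue classes exhibits `k ↦ ⟨f, S^k_j ψ⟩` as the discrete Fourier transform on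
`ZMod N` of the periodization `r ↦ h_j(r)`. As `R_j` is a complete residue system modulo `N`, what
remains is Plancherel's identity for the DFT on `ZMod N`.
-/

namespace ZMod

variable {N : ℕ} [NeZero N]

theorem sum_norm_sq_dft (Φ : ZMod N → ℂ) :
    ∑ k, ‖dft Φ k‖ ^ 2 = N * ∑ j, ‖Φ j‖ ^ 2 := by
  -- Plancherel from Fourier inversion, `𝓕 (𝓕 Φ) j = N • Φ (-j)`.
  have hdual (j : ZMod N) :
      ∑ k, stdAddChar (-(j * k)) * Φ j * conj (dft Φ k) = N * (Φ j * conj (Φ j)) := by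
    have := congrArg (Φ j * conj ·) (congrFun (dft_dft Φ) (-j))
    rw [dft_apply (dft Φ)] at this
    simp only [neg_neg, smul_eq_mul, map_sum, map_mul, mul_sum, map_natCast] at this
    rw [← mul_left_comm, ← this]
    refine sum_congr rfl fun k _ => ?_
    rw [← AddChar.map_neg_eq_conj, mul_comm k, neg_mul, neg_neg]
    ring
  apply ofReal_injective
  push_cast
  simp_rw [← mul_conj', mul_sum, ← hdual, dft_apply, smul_eq_mul, sum_mul]
  exact sum_comm

end ZMod

theorem bijOn_intCast_Ico (N : ℕ) [NeZero N] (a : ℤ) :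
    Set.BijOn ((↑) : ℤ → ZMod N) (Set.Ico a (a + N)) Set.univ := by
  have hN : (0 : ℤ) < N := by have := NeZero.pos N; omega
  refine ⟨Set.mapsTo_univ _ _, fun k hk k' hk' hkk' => ?_, fun x _ => ?_⟩
  · rw [← toIcoMod_eq_self hN] at hk hk'
    rw [← hk, ← hk', toIcoMod_eq_toIcoMod]
    obtain ⟨c, hc⟩ := (ZMod.intCast_eq_intCast_iff_dvd_sub _ _ _).1 hkk'
    exact ⟨c, by rw [hc, smul_eq_mul, mul_comm]⟩
  · obtain ⟨b, rfl⟩ := ZMod.intCast_surjective x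
    refine ⟨toIcoMod hN a b, toIcoMod_mem_Ico hN a b, ?_⟩
    rw [ZMod.intCast_eq_intCast_iff_dvd_sub, toIcoMod, sub_sub_cancel]
    exact Dvd.intro_left _ (zsmul_eq_mul _ _).symm

theorem Finset.sum_intCast_of_bijOn {M : Type*} [AddCommMonoid M] {N : ℕ} [NeZero N]
    {R : Finset ℤ} (hR : Set.BijOn ((↑) : ℤ → ZMod N) R Set.univ) (g : ZMod N → M) :
    ∑ k ∈ R, g k = ∑ x, g x :=
  Finset.sum_nbij _ (fun _ _ => mem_univ _) hR.injOn (by simpa using hR.surjOn) fun _ _ => rfl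

section Periodization

variable {M : Type*} [AddCommMonoid M]

/-- The `N`-periodization `x ↦ ∑_{n ≡ x} F n` of `F`, provided `s` contains the support of `F`. -/
def periodization (N : ℕ) (s : Finset ℤ) (F : ℤ → M) (x : ZMod N) : M :=
  ∑ n ∈ s with ((n : ℤ) : ZMod N) = x, F n

theorem sum_smul_eq_sum_smul_periodization {R : Type*} [Semiring R] [Module R M] (N : ℕ)
    [NeZero N] (s : Finset ℤ) (F : ℤ → M) (φ : ZMod N → R) :
    ∑ n ∈ s, φ n • F n = ∑ x, φ x • periodization N s F x := by
  simp_rw [periodization, smul_sum]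
  rw [← sum_fiberwise s ((↑) : ℤ → ZMod N)]
  exact sum_congr rfl fun x _ => sum_congr rfl fun n hn => by rw [(mem_filter.1 hn).2]

theorem tsum_comp_mul_add_eq_periodization [TopologicalSpace M] (N : ℕ) [NeZero N]
    {s : Finset ℤ} {F : ℤ → M} (hF : ∀ n ∉ s, F n = 0) (r : ℤ) :
    ∑' q : ℤ, F (N * q + r) = periodization N s F r := by
  classical
  set G : ℤ → M := fun n => if (n : ZMod N) = r then F n else 0
  have hinj : Function.Injective fun q : ℤ => N * q + r := fun q q' h => by
    simpa [NeZero.ne N] using h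
  have hsupp : G.support ⊆ Set.range fun q : ℤ => N * q + r := fun n hn => by
    have hnr : (n : ZMod N) = r := by_contra fun h => hn (if_neg h)
    obtain ⟨c, hc⟩ := (ZMod.intCast_eq_intCast_iff_dvd_sub _ _ _).1 hnr.symm
    exact ⟨c, by simp only; omega⟩
  calc ∑' q : ℤ, F (N * q + r) = ∑' q : ℤ, G (N * q + r) := by simp [G]
    _ = ∑ n ∈ s, G n := by
      rw [hinj.tsum_eq hsupp]
      exact tsum_eq_sum fun n hn => by simp [G, hF n hn]
    _ = periodization N s F r := (sum_filter _ _).symm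

end Periodization

section FourierSeries

open AddCircle

variable {T : ℝ}

theorem fourier_apply_add (n : ℤ) (x y : AddCircle T) :
    fourier n (x + y) = fourier n x * fourier n y := by
  simp_rw [fourier_apply, smul_add, toCircle_add, Circle.coe_mul]

theorem fourier_apply_neg (n : ℤ) (x : AddCircle T) : fourier n (-x) = conj (fourier n x) := by
  rw [← fourier_neg, fourier_apply, fourier_apply, neg_smul, smul_neg]

theorem fourier_coe_intCast_div (N : ℕ) [NeZero N] (n k : ℤ) :
    fourier n ((k / N : ℝ) : AddCircle (1 : ℝ)) =
      ZMod.stdAddChar ((n : ZMod N) * (k : ZMod N)) := by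
  rw [fourier_coe_apply, ← Int.cast_mul, ZMod.stdAddChar_coe]
  push_cast
  ring_nf

variable [Fact (0 < T)]

theorem integral_fourier_mul_conj_comp_add (g : AddCircle T → ℂ) (n : ℤ) (t : AddCircle T) :
    ∫ x, fourier n x * conj (g (x + t)) ∂haarAddCircle =
      conj (fourier n t * fourierCoeff g n) := by
  have hshift (x : AddCircle T) : fourier n x = conj (fourier n t) * fourier n (x + t) := by
    rw [← fourier_apply_neg, mul_comm, ← fourier_apply_add, add_neg_cancel_right]
  calc ∫ x, fourier n x * conj (g (x + t)) ∂haarAddCircle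
      = ∫ x, conj (fourier n t) * (fourier n (x + t) * conj (g (x + t))) ∂haarAddCircle :=
        integral_congr_ae (ae_of_all _ fun x => by dsimp only; rw [hshift x, mul_assoc])
    _ = conj (fourier n t) * ∫ x, fourier n x * conj (g x) ∂haarAddCircle := by
        rw [integral_const_mul, integral_add_right_eq_self (fun x => fourier n x * conj (g x)) t]
    _ = conj (fourier n t * fourierCoeff g n) := by
        rw [fourierCoeff, map_mul, ← integral_conj]
        congr 2 with x
        simp [mul_comm]

theorem integrable_fourier_mul_conj_comp_add {g : AddCircle T → ℂ}
    (hg : Integrable g haarAddCircle) (n : ℤ) (t : AddCircle T) :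
    Integrable (fun x => fourier n x * conj (g (x + t))) haarAddCircle :=
  (conjLIE.integrable_comp_iff.2 (hg.comp_add_right t)).bdd_mul
    (map_continuous _).aestronglyMeasurable (c := 1)
    (ae_of_all _ fun _ => (Circle.norm_coe _).le)

theorem ae_eq_sum_fourier_of_fourierCoeff_eq_zero (f : Lp ℂ 2 (haarAddCircle (T := T)))
    {s : Finset ℤ} (hs : ∀ n ∉ s, fourierCoeff f n = 0) :
    f =ᵐ[haarAddCircle] fun x => ∑ n ∈ s, fourierCoeff f n * fourier n x := by
  have hf : f = ∑ n ∈ s, fourierCoeff f n • fourierLp 2 n :=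
    (hasSum_fourier_series_L2 f).unique
      (hasSum_sum_of_ne_finset_zero fun n hn => by simp [hs n hn])
  have hsum := Lp.coeFn_fun_finsetSum s fun n => fourierCoeff f n • fourierLp (T := T) 2 n
  rw [← hf] at hsum
  filter_upwards [hsum,
    ae_all_iff.2 fun n => Lp.coeFn_smul (fourierCoeff f n) (fourierLp (T := T) 2 n),
    ae_all_iff.2 fun n => coeFn_fourierLp (T := T) 2 n] with x hsum hsmul hfourier
  rw [hsum]
  refine sum_congr rfl fun n _ => ?_
  rw [hsmul n, Pi.smul_apply, hfourier n, smul_eq_mul]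

theorem integral_mul_conj_comp_add_eq_sum (f : Lp ℂ 2 (haarAddCircle (T := T)))
    {s : Finset ℤ} (hs : ∀ n ∉ s, fourierCoeff f n = 0) {g : AddCircle T → ℂ}
    (hg : Integrable g haarAddCircle) (t : AddCircle T) :
    ∫ x, f x * conj (g (x + t)) ∂haarAddCircle =
      ∑ n ∈ s, conj (fourier n t) * (fourierCoeff f n * conj (fourierCoeff g n)) := by
  have hf := ae_eq_sum_fourier_of_fourierCoeff_eq_zero f hs
  rw [integral_congr_ae (by filter_upwards [hf] with x hx; rw [hx])]
  simp only [sum_mul, mul_assoc]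
  rw [integral_finsetSum _ fun n _ => (integrable_fourier_mul_conj_comp_add hg n t).const_mul _]
  refine sum_congr rfl fun n _ => ?_
  rw [integral_const_mul, integral_fourier_mul_conj_comp_add, map_mul]
  ring

end FourierSeries

theorem Rset_eq_Ico (j : ℕ) : ∃ a : ℤ, Rset j = Finset.Ico a (a + 2 ^ j) := by
  rcases j with _ | j
  · exact ⟨0, by ext k; simp [Rset]; omega⟩
  · refine ⟨1 - 2 ^ j, ?_⟩
    ext k
    simp only [Rset, if_neg j.succ_ne_zero, Nat.add_sub_cancel, mem_Icc, mem_Ico, pow_succ]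
    omega

theorem bijOn_intCast_Rset (j : ℕ) :
    Set.BijOn ((↑) : ℤ → ZMod (2 ^ j)) (Rset j) Set.univ := by
  obtain ⟨a, ha⟩ := Rset_eq_Ico j
  simpa [ha] using bijOn_intCast_Ico (2 ^ j) a

theorem shiftInner_eq_dft_periodization (f ψ : PL2) (hf : {n : ℤ | fCoeff f n ≠ 0}.Finite)
    (j : ℕ) (k : ℤ) :
    shiftInner f ψ j k =
      ZMod.dft (periodization (2 ^ j) hf.toFinset fun n => fCoeff f n * conj (fCoeff ψ n)) k := by
  have hs (n : ℤ) (hn : n ∉ hf.toFinset) : fourierCoeff f n = 0 := by simpa [fCoeff] using hn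
  have hψ : Integrable ψ AddCircle.haarAddCircle := (Lp.memLp ψ).integrable one_le_two
  rw [shiftInner, integral_mul_conj_comp_add_eq_sum f hs hψ, ZMod.dft_apply,
    ← sum_smul_eq_sum_smul_periodization]
  refine sum_congr rfl fun n _ => ?_
  rw [smul_eq_mul, AddChar.map_neg_eq_conj, ← fourier_coe_intCast_div]
  congr 4
  push_cast
  rw [zpow_neg, zpow_natCast, div_eq_mul_inv, mul_comm]

theorem shift_sum_eq_dft_sum
    (f ψ : PL2) (hf : {n : ℤ | fCoeff f n ≠ 0}.Finite) (j : ℕ) :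
    ∑ k ∈ Rset j, ‖shiftInner f ψ j k‖^2 =
      (2:ℝ)^j * ∑ n ∈ Rset j,
        ‖∑' q : ℤ, fCoeff f (2^j * q + n) * conj (fCoeff ψ (2^j * q + n))‖^2 := by
  set H := periodization (2 ^ j) hf.toFinset fun n => fCoeff f n * conj (fCoeff ψ n)
  have hR := bijOn_intCast_Rset j
  have hH (r : ℤ) :
      H r = ∑' q : ℤ, fCoeff f (2 ^ j * q + r) * conj (fCoeff ψ (2 ^ j * q + r)) := by
    have := tsum_comp_mul_add_eq_periodization (2 ^ j) (s := hf.toFinset)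
      (F := fun n => fCoeff f n * conj (fCoeff ψ n)) (fun n hn => by simp_all) r
    push_cast at this
    exact this.symm
  calc ∑ k ∈ Rset j, ‖shiftInner f ψ j k‖ ^ 2
      = ∑ x, ‖ZMod.dft H x‖ ^ 2 := by
        simp_rw [shiftInner_eq_dft_periodization f ψ hf]
        exact Finset.sum_intCast_of_bijOn hR fun x => ‖ZMod.dft H x‖ ^ 2
    _ = (2 : ℝ) ^ j * ∑ r ∈ Rset j, ‖H r‖ ^ 2 := by
        rw [ZMod.sum_norm_sq_dft, ← Finset.sum_intCast_of_bijOn hR]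
        push_cast
        rfl
    _ = _ := by simp_rw [hH]

end
end

section
/- Let f be a trigonometric polynomial (so f̂(n) = 0 for all but finitely many n ∈ ℤ), let ψ ∈ L₂ and j ∈ ℤ₊. Then Σ_{k∈R_j} |⟨f, S^k_j ψ⟩|² = 2^j Σ_{n∈ℤ} |f̂(n)|² |ψ̂(n)|² + 2^j Σ_{n∈ℤ} Σ_{q∈ℤ, q≠0} f̂(n) · conj(f̂(2^j q + n)) · conj(ψ̂(n)) · ψ̂(2^j q + n). -/
open MeasureTheory Complex Finset Filter ComplexConjugate

noncomputable section

/-!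
Parseval's identity, applied to `f` and to the translate of `ψ` by `c = 2^{-j} k`, gives
`⟨f, S^k_j ψ⟩ = ∑ₙ f̂(n) conj(ψ̂(n)) e^{-2πinc}`, a finite sum because `f` is a trigonometric
polynomial. Expanding the squared modulus and summing over the `2^j` consecutive integers
`k ∈ R_j`, the character sum `∑ₖ e^{2πi(m-n)k/2^j}` is `2^j` when `2^j ∣ m - n` and `0`
otherwise. What survives are the pairs `m = 2^j q + n`; the pairs with `q = 0` give the
diagonal term.
-/

open AddCircle

section Translation

variable {T : ℝ}

variable [hT : Fact (0 < T)]

theorem fourierCoeff_comp_add_right {E : Type*} [NormedAddCommGroup E] [NormedSpace ℂ E]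
    (f : AddCircle T → E) (c : AddCircle T) (n : ℤ) :
    fourierCoeff (fun x => f (x + c)) n = fourier n c • fourierCoeff f n := by
  have hshift (y : AddCircle T) : fourier (-n) (y - c) = fourier n c * fourier (-n) y := by
    rw [sub_eq_add_neg, fourier_apply_add, mul_comm, fourier_apply (x := -c), neg_smul_neg,
      ← fourier_apply]
  calc fourierCoeff (fun x => f (x + c)) n
      = ∫ x, fourier (-n) (x + c - c) • f (x + c) ∂haarAddCircle := by
        simp only [fourierCoeff, add_sub_cancel_right]
    _ = ∫ y, fourier n c • (fourier (-n) y • f y) ∂haarAddCircle := by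
        rw [integral_add_right_eq_self (fun y => fourier (-n) (y - c) • f y) c]
        simp only [hshift, mul_smul]
    _ = fourier n c • fourierCoeff f n := integral_smul _ _

theorem integral_mul_conj_comp_add_right_eq_tsum (f ψ : Lp ℂ 2 (@haarAddCircle T hT))
    (c : AddCircle T) :
    ∫ x, f x * conj (ψ (x + c)) ∂haarAddCircle =
      ∑' n : ℤ, fourierCoeff f n * conj (fourierCoeff ψ n) * fourier (-n) c := by
  have hc := measurePreserving_add_right (@haarAddCircle T hT) c
  set ψc := Lp.compMeasurePreserving (· + c) hc ψ
  have hψc : ⇑ψc =ᵐ[haarAddCircle] fun x => ψ (x + c) := Lp.coeFn_compMeasurePreserving ψ hc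
  have hinner : ∫ x, f x * conj (ψ (x + c)) ∂haarAddCircle = inner ℂ ψc f := by
    rw [L2.inner_def]
    refine integral_congr_ae ?_
    filter_upwards [hψc] with x hx
    rw [RCLike.inner_apply', hx, mul_comm]
  have hcoeff (n : ℤ) : fourierCoeff ψc n = fourier n c * fourierCoeff ψ n :=
    (congrFun (fourierCoeff_congr_ae hψc) n).trans (fourierCoeff_comp_add_right _ c n)
  rw [hinner, ← fourierBasis.tsum_inner_mul_inner]
  refine tsum_congr fun n => ?_
  rw [← inner_conj_symm, ← HilbertBasis.repr_apply_apply, ← HilbertBasis.repr_apply_apply,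
    fourierBasis_repr, fourierBasis_repr, hcoeff, fourier_neg, map_mul]
  ring

end Translation

theorem sum_Ico_fourier_div (N : ℕ) [NeZero N] (a d : ℤ) :
    ∑ k ∈ Ico a (a + N), fourier d ((k / N : ℝ) : AddCircle (1:ℝ)) =
      if (N:ℤ) ∣ d then (N:ℂ) else 0 := by
  set ζ := ZMod.stdAddChar (d : ZMod N) with hζdef
  have hterm (k : ℤ) : fourier d ((k / N : ℝ) : AddCircle (1:ℝ)) = ζ ^ k := by
    rw [fourier_coe_apply, hζdef, ZMod.stdAddChar_coe, ← Complex.exp_int_mul]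
    congr 1
    push_cast
    ring
  have hζN : ζ ^ N = 1 := by
    rw [← AddChar.map_nsmul_eq_pow, nsmul_eq_mul, ZMod.natCast_self, zero_mul,
      AddChar.map_zero_eq_one]
  have hζ : ζ = 1 ↔ (N:ℤ) ∣ d := by
    rw [← AddChar.map_zero_eq_one (ZMod.stdAddChar (N := N)), ZMod.injective_stdAddChar.eq_iff,
      ZMod.intCast_zmod_eq_zero_iff_dvd]
  have hζ0 : ζ ≠ 0 := fun h => by simp [h, zero_pow (NeZero.ne N)] at hζN
  rw [Int.Ico_eq_finset_map, sum_map, add_sub_cancel_left, Int.toNat_natCast]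
  simp only [hterm, Function.Embedding.trans_apply, Nat.castEmbedding_apply,
    addLeftEmbedding_apply, zpow_add₀ hζ0, zpow_natCast, ← mul_sum]
  split_ifs with h
  · simp [hζ.2 h]
  · rw [geom_sum_eq (mt hζ.1 h), hζN]
    simp

theorem Summable.tsum_eq_add_tsum_subtype_ne {α β : Type*} [AddCommGroup α] [TopologicalSpace α]
    [IsTopologicalAddGroup α] [T2Space α] {f : β → α} (hf : Summable f) (b : β) :
    ∑' x, f x = f b + ∑' x : {x // x ≠ b}, f x := by
  classical
  rw [hf.tsum_eq_add_tsum_ite b]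
  congr 1
  symm
  refine (_root_.tsum_subtype {x | x ≠ b} f).trans (tsum_congr fun x => ?_)
  by_cases hx : x = b <;> simp [hx]

section ResidueClass

variable {M : Type*} [AddCommMonoid M] [TopologicalSpace M] {h : ℤ → M} {s : Finset ℤ}
  {N : ℤ}

theorem summable_comp_mul_add (hs : ∀ m ∉ s, h m = 0) (hN : N ≠ 0) (n : ℤ) :
    Summable fun q => h (N * q + n) :=
  summable_of_ne_finset_zero (s := s.preimage _ ((add_left_injective n).comp
    (mul_right_injective₀ hN)).injOn) fun q hq => hs _ (by simpa using hq)

theorem tsum_comp_mul_add_eq_sum_ite_dvd (hs : ∀ m ∉ s, h m = 0) (hN : N ≠ 0) (n : ℤ) :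
    ∑' q, h (N * q + n) = ∑ m ∈ s, if N ∣ m - n then h m else 0 := by
  have hinj : Function.Injective fun q => N * q + n :=
    (add_left_injective n).comp (mul_right_injective₀ hN)
  set g : ℤ → M := fun m => if N ∣ m - n then h m else 0
  have hsupp : Function.support g ⊆ Set.range fun q => N * q + n := by
    intro m hm
    obtain ⟨q, hq⟩ : N ∣ m - n := by by_contra hdvd; simp [g, hdvd] at hm
    exact ⟨q, by simp only; omega⟩
  calc ∑' q, h (N * q + n) = ∑' q, g (N * q + n) := by simp [g]
    _ = ∑' m, g m := hinj.tsum_eq hsupp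
    _ = ∑ m ∈ s, g m := tsum_eq_sum fun m hm => by simp [g, hs m hm]

end ResidueClass

def dyadicShift (j : ℕ) (k : ℤ) : AddCircle (1:ℝ) :=
  (((2:ℝ) ^ (-(j:ℤ)) * k : ℝ) : AddCircle (1:ℝ))

theorem exists_Rset_eq_Ico (j : ℕ) : ∃ a : ℤ, Rset j = Ico a (a + 2 ^ j) := by
  cases j with
  | zero => exact ⟨0, rfl⟩
  | succ m =>
    refine ⟨-2 ^ m + 1, ?_⟩
    ext k
    simp only [Rset, Nat.succ_ne_zero, if_false, Nat.add_sub_cancel, mem_Icc, mem_Ico, pow_succ]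
    omega

theorem sum_Rset_fourier_dyadicShift (j : ℕ) (d : ℤ) :
    ∑ k ∈ Rset j, fourier d (dyadicShift j k) = if (2:ℤ) ^ j ∣ d then (2:ℂ) ^ j else 0 := by
  obtain ⟨a, ha⟩ := exists_Rset_eq_Ico j
  have h := sum_Ico_fourier_div (2 ^ j) a d
  push_cast at h
  rw [ha, ← h]
  refine sum_congr rfl fun k _ => ?_
  rw [dyadicShift, zpow_neg, zpow_natCast, inv_mul_eq_div]

theorem sum_Rset_norm_sq_sum_fourier (a : ℤ → ℂ) (s : Finset ℤ) (j : ℕ) :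
    ((∑ k ∈ Rset j, ‖∑ n ∈ s, a n * fourier (-n) (dyadicShift j k)‖ ^ 2 : ℝ) : ℂ) =
      2 ^ j * ∑ n ∈ s, ∑ m ∈ s, if (2:ℤ) ^ j ∣ m - n then a n * conj (a m) else 0 := by
  have hsq (k : ℤ) : (‖∑ n ∈ s, a n * fourier (-n) (dyadicShift j k)‖ : ℂ) ^ 2 =
      ∑ n ∈ s, ∑ m ∈ s, a n * conj (a m) * fourier (m - n) (dyadicShift j k) := by
    rw [← Complex.mul_conj', map_sum, sum_mul_sum]
    refine sum_congr rfl fun n _ => sum_congr rfl fun m _ => ?_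
    rw [map_mul, ← fourier_neg, neg_neg, sub_eq_add_neg, fourier_add]
    ring
  push_cast
  simp_rw [hsq]
  rw [sum_comm]
  simp_rw [sum_comm (s := Rset j), ← mul_sum, sum_Rset_fourier_dyadicShift, mul_sum]
  refine sum_congr rfl fun n _ => sum_congr rfl fun m _ => ?_
  split_ifs <;> ring

theorem shiftInner_eq_sum (f ψ : PL2) {s : Finset ℤ} (hs : ∀ n ∉ s, fCoeff f n = 0)
    (j : ℕ) (k : ℤ) :
    shiftInner f ψ j k =
      ∑ n ∈ s, fCoeff f n * conj (fCoeff ψ n) * fourier (-n) (dyadicShift j k) :=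
  (integral_mul_conj_comp_add_right_eq_tsum f ψ _).trans
    (tsum_eq_sum fun n hn => mul_eq_zero_of_left (mul_eq_zero_of_left (hs n hn) _) _)

theorem shift_sum_diagonal_offdiagonal
    (f ψ : PL2) (hf : {n : ℤ | fCoeff f n ≠ 0}.Finite) (j : ℕ) :
    ((∑ k ∈ Rset j, ‖shiftInner f ψ j k‖^2 : ℝ) : ℂ) =
      (2:ℂ)^j * ∑' n : ℤ,
        ((‖fCoeff f n‖^2 * ‖fCoeff ψ n‖^2 : ℝ) : ℂ)
      + (2:ℂ)^j * ∑' n : ℤ, ∑' q : {q : ℤ // q ≠ 0},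
          fCoeff f n * conj (fCoeff f (2^j * (q:ℤ) + n)) *
            conj (fCoeff ψ n) * fCoeff ψ (2^j * (q:ℤ) + n) := by
  set s := hf.toFinset
  have hfs : ∀ n ∉ s, fCoeff f n = 0 := fun n hn => by simpa [s] using hn
  set a : ℤ → ℂ := fun n => fCoeff f n * conj (fCoeff ψ n)
  have has : ∀ n ∉ s, a n = 0 := fun n hn => by simp [a, hfs n hn]
  have hN : (2:ℤ) ^ j ≠ 0 := by positivity
  have hshift (k : ℤ) : shiftInner f ψ j k = ∑ n ∈ s, a n * fourier (-n) (dyadicShift j k) :=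
    shiftInner_eq_sum f ψ hfs j k
  have hclass (n : ℤ) :
      ∑ m ∈ s, (if (2:ℤ) ^ j ∣ m - n then a n * conj (a m) else 0) =
        a n * conj (a n) + ∑' q : {q : ℤ // q ≠ 0}, a n * conj (a (2^j * q + n)) := by
    have hvan : ∀ m ∉ s, a n * conj (a m) = 0 := fun m hm => by simp [has m hm]
    rw [← tsum_comp_mul_add_eq_sum_ite_dvd hvan hN n,
      (summable_comp_mul_add hvan hN n).tsum_eq_add_tsum_subtype_ne 0]
    simp
  have hdiag (n : ℤ) : ((‖fCoeff f n‖^2 * ‖fCoeff ψ n‖^2 : ℝ) : ℂ) = a n * conj (a n) := by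
    rw [Complex.mul_conj']
    simp only [ofReal_mul, ofReal_pow, Complex.norm_mul, RCLike.norm_conj, a]
    ring
  have hoff (n q : ℤ) : fCoeff f n * conj (fCoeff f (2^j * q + n)) * conj (fCoeff ψ n) *
      fCoeff ψ (2^j * q + n) = a n * conj (a (2^j * q + n)) := by
    simp only [a, map_mul, Complex.conj_conj]
    ring
  simp_rw [hdiag, hoff, hshift, sum_Rset_norm_sq_sum_fourier, hclass, sum_add_distrib, mul_add]
  rw [tsum_eq_sum (s := s), tsum_eq_sum (s := s)] <;> intro n hn <;> simp [has n hn]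

end
end

section
/- Suppose functions φ_j ∈ L₂ (j ∈ ℕ) satisfy the refinement equation with masks â_{j+1} ∈ S(2^{j+1}), and for each j ∈ ℤ₊ the functions ψ^m_j ∈ L₂ (m = 1,…,ρ_j, ρ_j positive integers) are defined by the wavelet equation with masks b̂^m_{j+1} ∈ S(2^{j+1}); let θ_j be the fundamental coefficients. If Ψ = {S^k_j ψ^m_j : j ∈ ℤ₊, m = 1,…,ρ_j, k ∈ R_j} forms a Parseval wavelet frame in L₂, then (i) lim_{j→∞} 2^j |φ̂_j(n)|² θ_j(n) = 1 for every n ∈ ℤ, and (ii) θ_j(n) · conj(â_{j+1}(n)) · â_{j+1}(n + 2^j) + Σ_{m=1}^{ρ_j} conj(b̂^m_{j+1}(n)) · b̂^m_{j+1}(n + 2^j) = 0 for every n ∈ ℤ and every j ∈ ℤ₊ for which there exists an odd integer k with φ̂_{j+1}(n) ≠ 0 and φ̂_{j+1}(2^j k + n) ≠ 0. -/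
/-!
Testing the Parseval identity on exponentials, and polarizing it, gives
`Σ_j [2^j ∣ n' - n] 2^j Σ_m conj(ψ̂^m_j(n)) ψ̂^m_j(n') = δ_{n n'}`: the dyadic translates turn
`⟨e_n, S^k_j ψ⟩` into a character of `k`, whose sum over `R_j` detects `2^j ∣ n' - n`.
The refinement and wavelet equations telescope the first `J` terms of this series into
`2^J conj(φ̂_J(n)) φ̂_J(n') θ_J(n)` as long as `2^J ∣ n' - n`. For `n' = n` this is (i). For
`n' = n + 2^j k` with `k` odd the scales beyond `j` do not contribute, and one more step of the
recursion turns the vanishing of the sum into (ii).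
-/

open MeasureTheory Complex Finset Filter ComplexConjugate

noncomputable section

/-- Fundamental coefficients: `θ₀(n) = 0`,
`θ_{j+1}(n) = Σ_{m=1}^{ρ_j} |b̂^m_{j+1}(n)|² + θ_j(n)·|â_{j+1}(n)|²`. -/
def theta (ρ : ℕ → ℕ) (a : ℕ → ℤ → ℂ) (b : ℕ → ℕ → ℤ → ℂ) : ℕ → ℤ → ℝ
  | 0, _ => 0
  | (j+1), n =>
      (∑ m ∈ Finset.Icc 1 (ρ j), ‖b (j+1) m n‖^2)
        + theta ρ a b j n * ‖a (j+1) n‖^2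

theorem hasSum_inner_of_hasSum_norm_sq {𝕜 E β ι : Type*} [RCLike 𝕜] [NormedAddCommGroup E]
    [InnerProductSpace 𝕜 E] (s : β → Finset ι) (u : β → ι → E)
    (h : ∀ f : E, HasSum (fun j => ∑ i ∈ s j, ‖(inner 𝕜 (u j i) f : 𝕜)‖ ^ 2) (‖f‖ ^ 2))
    (f g : E) :
    HasSum (fun j => ∑ i ∈ s j, conj (inner 𝕜 (u j i) f) * inner 𝕜 (u j i) g) (inner 𝕜 f g) := by
  have hC : ∀ h' : E, HasSum (fun j => ∑ i ∈ s j, (‖(inner 𝕜 (u j i) h' : 𝕜)‖ : 𝕜) ^ 2)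
      ((‖h'‖ : 𝕜) ^ 2) := fun h' => by
    simpa using (RCLike.hasSum_ofReal 𝕜).mpr (h h')
  rw [inner_eq_sum_norm_sq_div_four f g]
  convert (((hC (f + g)).sub (hC (f - g))).add
    (((hC (f - RCLike.I • g)).sub (hC (f + RCLike.I • g))).mul_right RCLike.I)).div_const 4 using 1
  funext j
  simp only [← sum_sub_distrib, sum_mul, ← sum_add_distrib, sum_div]
  refine sum_congr rfl fun i _ => ?_
  rw [mul_comm, ← RCLike.inner_apply, inner_eq_sum_norm_sq_div_four (𝕜 := 𝕜)]
  simp only [inner_add_right, inner_sub_right, inner_smul_right, smul_eq_mul]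

theorem Function.Periodic.eq_of_dvd_sub {α : Type*} {f : ℤ → α} {c x y : ℤ}
    (h : Function.Periodic f c) (hxy : c ∣ y - x) : f y = f x := by
  obtain ⟨q, hq⟩ := hxy
  rw [show y = x + q * c by linarith]
  exact h.int_mul q x

theorem sum_zpow_Ico_eq_zero {K : Type*} [Field K] {ω : K} {N : ℕ} (hN : ω ^ N = 1)
    (hω : ω ≠ 1) (c : ℤ) : ∑ k ∈ Ico c (c + N), ω ^ k = 0 := by
  rcases Nat.eq_zero_or_pos N with rfl | hNpos
  · simp
  have hω0 : ω ≠ 0 := by rintro rfl; simp [zero_pow hNpos.ne'] at hN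
  rw [Int.Ico_eq_finset_map, sum_map, add_sub_cancel_left, Int.toNat_natCast]
  simp only [Function.Embedding.trans_apply, Nat.castEmbedding_apply, addLeftEmbedding_apply,
    zpow_add₀ hω0, zpow_natCast, ← mul_sum, geom_sum_eq hω, hN, sub_self, zero_div,
    mul_zero]

theorem not_two_pow_dvd_two_pow_mul_odd {j j' : ℕ} {k : ℤ} (hjj' : j < j') (hk : Odd k) :
    ¬ (2 : ℤ) ^ j' ∣ 2 ^ j * k := by
  intro h
  have h2 : (2 : ℤ) ^ j * 2 ∣ 2 ^ j * k := (pow_succ (2 : ℤ) j ▸ pow_dvd_pow 2 hjj').trans h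
  exact Int.not_even_iff_odd.mpr hk (even_iff_two_dvd.mpr
    ((mul_dvd_mul_iff_left (pow_ne_zero j two_ne_zero)).mp h2))

theorem conj_mul_of_eq_sqrt_two_mul {x x' α α' y y' : ℂ} (hx : x = (Real.sqrt 2 : ℂ) * α * y)
    (hx' : x' = (Real.sqrt 2 : ℂ) * α' * y') :
    conj x * x' = 2 * (conj α * α') * (conj y * y') := by
  have hsqrt : ((Real.sqrt 2 : ℝ) : ℂ) * (Real.sqrt 2 : ℝ) = 2 := by
    rw [← ofReal_mul, Real.mul_self_sqrt zero_le_two, ofReal_ofNat]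
  rw [hx, hx', map_mul, map_mul, conj_ofReal]
  linear_combination (conj α * α' * (conj y * y')) * hsqrt

def dyadicPoint (j : ℕ) (k : ℤ) : AddCircle (1 : ℝ) := ((2:ℝ) ^ (-(j:ℤ)) * k : ℝ)

theorem fourier_dyadicPoint (d : ℤ) (j : ℕ) (k : ℤ) :
    fourier d (dyadicPoint j k) = (cexp (2 * Real.pi * I / (2 ^ j : ℕ)) ^ d) ^ k := by
  rw [dyadicPoint, fourier_coe_apply, ← zpow_mul, ← exp_int_mul]
  congr 1
  push_cast
  rw [zpow_neg, zpow_natCast]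
  field_simp

theorem Rset_eq_Ico_s9 {j : ℕ} (hj : j ≠ 0) :
    Rset j = Ico (-(2 ^ (j - 1)) + 1) (-(2 ^ (j - 1)) + 1 + ((2 ^ j : ℕ) : ℤ)) := by
  obtain ⟨i, rfl⟩ := Nat.exists_eq_add_one_of_ne_zero hj
  rw [Rset, if_neg hj, ← Ico_add_one_right_eq_Icc]
  congr 1
  push_cast
  ring

theorem sum_fourier_dyadicPoint (j : ℕ) (d : ℤ) :
    ∑ k ∈ Rset j, fourier d (dyadicPoint j k) = if (2 ^ j : ℤ) ∣ d then (2 : ℂ) ^ j else 0 := by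
  have hζ := isPrimitiveRoot_exp (2 ^ j) (by positivity)
  simp only [fourier_dyadicPoint]
  split_ifs with hd
  · rw [(hζ.zpow_eq_one_iff_dvd d).mpr (by exact_mod_cast hd)]
    rcases eq_or_ne j 0 with rfl | hj
    · simp [Rset]
    · simp only [Rset_eq_Ico_s9 hj, one_zpow, sum_const, Int.card_Ico, add_sub_cancel_left,
        Int.toNat_natCast, nsmul_eq_mul, mul_one]
      push_cast
      rfl
  · have hj : j ≠ 0 := by rintro rfl; exact hd (by simp)
    rw [Rset_eq_Ico_s9 hj]
    refine sum_zpow_Ico_eq_zero ?_ (mt (hζ.zpow_eq_one_iff_dvd d).mp (by exact_mod_cast hd)) _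
    rw [← zpow_natCast, ← zpow_mul, mul_comm d, zpow_mul, zpow_natCast, hζ.pow_eq_one, one_zpow]

theorem fourier_sub_apply (n : ℤ) (y t : AddCircle (1 : ℝ)) :
    fourier n (y - t) = fourier (-n) t * fourier n y := by
  rw [fourier_apply, fourier_apply, fourier_apply, smul_sub, sub_eq_neg_add, AddCircle.toCircle_add,
    neg_smul, Circle.coe_mul]

def translateL2 (t : AddCircle (1 : ℝ)) (g : PL2) : PL2 :=
  Lp.compMeasurePreserving (· + t) (measurePreserving_add_right _ t) g

theorem shiftInner_eq_inner (f g : PL2) (j : ℕ) (k : ℤ) :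
    shiftInner f g j k = inner ℂ (translateL2 (dyadicPoint j k) g) f := by
  rw [shiftInner, L2.inner_def]
  refine integral_congr_ae ?_
  filter_upwards [Lp.coeFn_compMeasurePreserving g (measurePreserving_add_right _ _)] with x hx
  rw [translateL2, hx, RCLike.inner_apply]
  rfl

theorem IsParsevalFrame.hasSum_norm_sq {ρ : ℕ → ℕ} {ψ : ℕ → ℕ → PL2}
    (hframe : IsParsevalFrame ρ ψ) (f : PL2) :
    HasSum (fun j => ∑ m ∈ Icc 1 (ρ j), ∑ k ∈ Rset j, ‖shiftInner f (ψ j m) j k‖ ^ 2)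
      (‖f‖ ^ 2) := by
  by_cases hs : Summable fun j => ∑ m ∈ Icc 1 (ρ j), ∑ k ∈ Rset j, ‖shiftInner f (ψ j m) j k‖ ^ 2
  · rw [hframe f]
    exact hs.hasSum
  · have hf : f = 0 := by simpa [tsum_eq_zero_of_not_summable hs] using hframe f
    simp [hf, shiftInner_eq_inner] at hs

theorem IsParsevalFrame.hasSum_inner {ρ : ℕ → ℕ} {ψ : ℕ → ℕ → PL2}
    (hframe : IsParsevalFrame ρ ψ) (f g : PL2) :
    HasSum (fun j => ∑ m ∈ Icc 1 (ρ j), ∑ k ∈ Rset j,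
      conj (shiftInner f (ψ j m) j k) * shiftInner g (ψ j m) j k) (inner ℂ f g) := by
  have h := hasSum_inner_of_hasSum_norm_sq (𝕜 := ℂ) (fun j => Icc 1 (ρ j) ×ˢ Rset j)
    (fun j i => translateL2 (dyadicPoint j i.2) (ψ j i.1))
    (fun f' => by simpa only [sum_product, shiftInner_eq_inner] using hframe.hasSum_norm_sq f') f g
  simpa only [sum_product, shiftInner_eq_inner] using h

theorem shiftInner_fourierLp (n : ℤ) (g : PL2) (j : ℕ) (k : ℤ) :
    shiftInner (fourierLp 2 n) g j k = fourier (-n) (dyadicPoint j k) * conj (fCoeff g n) := by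
  set t := dyadicPoint j k
  calc shiftInner (fourierLp 2 n) g j k
      = ∫ x, fourier n x * conj (g (x + t)) ∂AddCircle.haarAddCircle := by
        refine integral_congr_ae ?_
        filter_upwards [coeFn_fourierLp 2 n] with x hx
        rw [hx]
        rfl
    _ = ∫ y, fourier n (y - t) * conj (g y) ∂AddCircle.haarAddCircle := by
        rw [← integral_add_right_eq_self (fun y => fourier n (y - t) * conj (g y)) t]
        simp only [add_sub_cancel_right]
    _ = fourier (-n) t * ∫ y, conj (fourier (-n) y * g y) ∂AddCircle.haarAddCircle := by
        rw [← integral_const_mul]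
        congr 1 with y
        rw [fourier_sub_apply, map_mul, ← fourier_neg, neg_neg, mul_assoc]
    _ = fourier (-n) t * conj (fCoeff g n) := by
        rw [integral_conj]
        rfl

def RefinementEq (Φ a : ℕ → ℤ → ℂ) : Prop :=
  ∀ j, 1 ≤ j → ∀ n, Φ j n = (Real.sqrt 2 : ℂ) * a (j + 1) n * Φ (j + 1) n

def WaveletEq (ρ : ℕ → ℕ) (Ψ : ℕ → ℕ → ℤ → ℂ) (b : ℕ → ℕ → ℤ → ℂ) (Φ : ℕ → ℤ → ℂ) : Prop :=
  ∀ j m, 1 ≤ m → m ≤ ρ j → ∀ n, Ψ j m n = (Real.sqrt 2 : ℂ) * b (j + 1) m n * Φ (j + 1) n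

def thetaCross (ρ : ℕ → ℕ) (a : ℕ → ℤ → ℂ) (b : ℕ → ℕ → ℤ → ℂ) (j : ℕ) (n n' : ℤ) : ℂ :=
  (theta ρ a b j n : ℂ) * conj (a (j + 1) n) * a (j + 1) n' +
    ∑ m ∈ Icc 1 (ρ j), conj (b (j + 1) m n) * b (j + 1) m n'

section

variable {ρ : ℕ → ℕ} {a : ℕ → ℤ → ℂ} {b : ℕ → ℕ → ℤ → ℂ} {Φ : ℕ → ℤ → ℂ} {Ψ : ℕ → ℕ → ℤ → ℂ}

theorem thetaCross_self (j : ℕ) (n : ℤ) : thetaCross ρ a b j n n = theta ρ a b (j + 1) n := by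
  simp only [thetaCross, theta, conj_mul', mul_assoc]
  push_cast
  ring

theorem thetaCross_congr (ha : ∀ j, 1 ≤ j → Function.Periodic (a (j + 1)) (2 ^ (j + 1)))
    (hb : ∀ j m, 1 ≤ m → m ≤ ρ j → Function.Periodic (b (j + 1) m) (2 ^ (j + 1)))
    {j : ℕ} {n n₁ n₂ : ℤ} (h : 2 ^ (j + 1) ∣ n₂ - n₁) :
    thetaCross ρ a b j n n₂ = thetaCross ρ a b j n n₁ := by
  rw [thetaCross, thetaCross]
  congr 1
  · rcases Nat.eq_zero_or_pos j with rfl | hj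
    · simp [theta]
    · rw [(ha j hj).eq_of_dvd_sub h]
  · refine sum_congr rfl fun m hm => ?_
    rw [mem_Icc] at hm
    rw [(hb j m hm.1 hm.2).eq_of_dvd_sub h]

theorem cross_eq_two_mul_thetaCross (href : RefinementEq Φ a) (hwav : WaveletEq ρ Ψ b Φ)
    (j : ℕ) (n n' : ℤ) :
    conj (Φ j n) * Φ j n' * theta ρ a b j n + ∑ m ∈ Icc 1 (ρ j), conj (Ψ j m n) * Ψ j m n' =
      2 * (conj (Φ (j + 1) n) * Φ (j + 1) n') * thetaCross ρ a b j n n' := by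
  have hΨ : ∀ m ∈ Icc 1 (ρ j), conj (Ψ j m n) * Ψ j m n' =
      2 * (conj (Φ (j + 1) n) * Φ (j + 1) n') * (conj (b (j + 1) m n) * b (j + 1) m n') := by
    intro m hm
    rw [mem_Icc] at hm
    rw [conj_mul_of_eq_sqrt_two_mul (hwav j m hm.1 hm.2 n) (hwav j m hm.1 hm.2 n')]
    ring
  have hΦ : conj (Φ j n) * Φ j n' * theta ρ a b j n = 2 * (conj (Φ (j + 1) n) * Φ (j + 1) n') *
      (theta ρ a b j n * conj (a (j + 1) n) * a (j + 1) n') := by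
    rcases Nat.eq_zero_or_pos j with rfl | hj
    · simp [theta]
    · rw [conj_mul_of_eq_sqrt_two_mul (href j hj n) (href j hj n')]
      ring
  rw [sum_congr rfl hΨ, ← mul_sum, hΦ, thetaCross]
  ring

theorem sum_range_wavelet_cross_eq (href : RefinementEq Φ a) (hwav : WaveletEq ρ Ψ b Φ)
    (ha : ∀ j, 1 ≤ j → Function.Periodic (a (j + 1)) (2 ^ (j + 1)))
    (hb : ∀ j m, 1 ≤ m → m ≤ ρ j → Function.Periodic (b (j + 1) m) (2 ^ (j + 1)))
    (J : ℕ) (n n' : ℤ) (h : 2 ^ J ∣ n' - n) :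
    ∑ j ∈ range J, (2 : ℂ) ^ j * ∑ m ∈ Icc 1 (ρ j), conj (Ψ j m n) * Ψ j m n' =
      2 ^ J * (conj (Φ J n) * Φ J n') * theta ρ a b J n := by
  induction J with
  | zero => simp [theta]
  | succ J ih =>
    rw [sum_range_succ, ih (dvd_trans (pow_dvd_pow 2 J.le_succ) h), ← thetaCross_self,
      ← thetaCross_congr ha hb h]
    linear_combination 2 ^ J * cross_eq_two_mul_thetaCross href hwav J n n'

/-- The Parseval frame identity polarized at the pair of exponentials `(e_{n'}, e_n)`. -/
def IsFourierParseval (ρ : ℕ → ℕ) (Ψ : ℕ → ℕ → ℤ → ℂ) : Prop :=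
  ∀ n n' : ℤ, HasSum (fun j => (if (2 ^ j : ℤ) ∣ n' - n then (2 : ℂ) ^ j else 0) *
    ∑ m ∈ Icc 1 (ρ j), conj (Ψ j m n) * Ψ j m n') (if n' = n then 1 else 0)

theorem IsParsevalFrame.isFourierParseval {ψ : ℕ → ℕ → PL2} (hframe : IsParsevalFrame ρ ψ) :
    IsFourierParseval ρ fun j m => fCoeff (ψ j m) := by
  intro n n'
  rw [← orthonormal_iff_ite.mp (orthonormal_fourier (T := 1)) n' n]
  convert hframe.hasSum_inner (fourierLp 2 n') (fourierLp 2 n) using 2 with j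
  rw [← sum_fourier_dyadicPoint, mul_sum]
  refine sum_congr rfl fun m _ => ?_
  rw [sum_mul]
  refine sum_congr rfl fun k _ => ?_
  rw [shiftInner_fourierLp, shiftInner_fourierLp, sub_eq_add_neg, fourier_add, map_mul,
    ← fourier_neg, neg_neg, conj_conj]
  ring

theorem IsFourierParseval.tendsto_theta (hP : IsFourierParseval ρ Ψ) (href : RefinementEq Φ a)
    (hwav : WaveletEq ρ Ψ b Φ) (ha : ∀ j, 1 ≤ j → Function.Periodic (a (j + 1)) (2 ^ (j + 1)))
    (hb : ∀ j m, 1 ≤ m → m ≤ ρ j → Function.Periodic (b (j + 1) m) (2 ^ (j + 1))) (n : ℤ) :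
    Tendsto (fun J => (2 : ℝ) ^ J * ‖Φ J n‖ ^ 2 * theta ρ a b J n) atTop (nhds 1) := by
  have hs := hP n n
  simp only [sub_self, dvd_zero, if_true] at hs
  rw [← tendsto_ofReal_iff, ofReal_one]
  convert hs.tendsto_sum_nat using 2 with J
  rw [sum_range_wavelet_cross_eq href hwav ha hb J n n (by simp), conj_mul']
  push_cast
  ring

theorem IsFourierParseval.thetaCross_eq_zero (hP : IsFourierParseval ρ Ψ)
    (href : RefinementEq Φ a) (hwav : WaveletEq ρ Ψ b Φ)
    (ha : ∀ j, 1 ≤ j → Function.Periodic (a (j + 1)) (2 ^ (j + 1)))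
    (hb : ∀ j m, 1 ≤ m → m ≤ ρ j → Function.Periodic (b (j + 1) m) (2 ^ (j + 1)))
    {j : ℕ} {n k : ℤ} (hk : Odd k) (hΦ : Φ (j + 1) n ≠ 0) (hΦ' : Φ (j + 1) (2 ^ j * k + n) ≠ 0) :
    thetaCross ρ a b j n (n + 2 ^ j) = 0 := by
  set n' := 2 ^ j * k + n
  have hk0 : k ≠ 0 := by rintro rfl; simp at hk
  have hs := hP n n'
  rw [if_neg (by simp [n', hk0])] at hs
  have hfin := hs.unique (hasSum_sum_of_ne_finset_zero (s := range (j + 1)) fun j' hj' => by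
    rw [if_neg (show ¬ 2 ^ j' ∣ n' - n by
      simpa [n'] using not_two_pow_dvd_two_pow_mul_odd (by simp at hj'; omega) hk), zero_mul])
  have hdvd : 2 ^ j ∣ n' - n := ⟨k, by simp [n']⟩
  simp only [ite_mul, zero_mul] at hfin
  rw [sum_ite_of_true fun x hx => (pow_dvd_pow 2 (mem_range_succ_iff.mp hx)).trans hdvd,
    sum_range_succ, sum_range_wavelet_cross_eq href hwav ha hb j n n' hdvd] at hfin
  have hcross : (2 : ℂ) ^ (j + 1) * (conj (Φ (j + 1) n) * Φ (j + 1) n') *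
      thetaCross ρ a b j n n' = 0 := by
    linear_combination (2 : ℂ) ^ j * (cross_eq_two_mul_thetaCross href hwav j n n').symm - hfin
  rw [thetaCross_congr ha hb (n₁ := n + 2 ^ j) ?_] at hcross
  · simpa [hΦ, hΦ'] using hcross
  · obtain ⟨q, rfl⟩ := hk
    exact ⟨q, by simp only [n']; ring⟩

end

theorem parseval_frame_necessity_fundamental_general
    (ρ : ℕ → ℕ)
    (φ : ℕ → PL2) (ψ : ℕ → ℕ → PL2)
    (a : ℕ → ℤ → ℂ) (b : ℕ → ℕ → ℤ → ℂ)
    (ha_per : ∀ j : ℕ, 1 ≤ j → ∀ n : ℤ, a (j+1) (n + 2^(j+1)) = a (j+1) n)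
    (hb_per : ∀ j : ℕ, ∀ m, 1 ≤ m → m ≤ ρ j → ∀ n : ℤ,
        b (j+1) m (n + 2^(j+1)) = b (j+1) m n)
    (href : ∀ j : ℕ, 1 ≤ j → ∀ n : ℤ,
        fCoeff (φ j) n = (Real.sqrt 2 : ℂ) * a (j+1) n * fCoeff (φ (j+1)) n)
    (hwav : ∀ j : ℕ, ∀ m, 1 ≤ m → m ≤ ρ j → ∀ n : ℤ,
        fCoeff (ψ j m) n = (Real.sqrt 2 : ℂ) * b (j+1) m n * fCoeff (φ (j+1)) n)
    (hframe : IsParsevalFrame ρ ψ) :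
    (∀ n : ℤ, Filter.Tendsto
        (fun j : ℕ => (2:ℝ)^j * ‖fCoeff (φ j) n‖^2 * theta ρ a b j n)
        Filter.atTop (nhds 1)) ∧
    (∀ j : ℕ, ∀ n : ℤ,
        (∃ k : ℤ, Odd k ∧ fCoeff (φ (j+1)) n ≠ 0 ∧ fCoeff (φ (j+1)) (2^j * k + n) ≠ 0) →
        ((theta ρ a b j n : ℝ) : ℂ) * conj (a (j+1) n) * a (j+1) (n + 2^j)
          + ∑ m ∈ Finset.Icc 1 (ρ j), conj (b (j+1) m n) * b (j+1) m (n + 2^j) = 0) :=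
  ⟨hframe.isFourierParseval.tendsto_theta (Φ := fun j => fCoeff (φ j)) href hwav ha_per hb_per,
    fun _ _ ⟨_, hk, hφ, hφ'⟩ => hframe.isFourierParseval.thetaCross_eq_zero
      (Φ := fun j => fCoeff (φ j)) href hwav ha_per hb_per hk hφ hφ'⟩

theorem parseval_frame_necessity_fundamental
    (ρ : ℕ → ℕ) (hρ : ∀ j, 0 < ρ j)
    (φ : ℕ → PL2) (ψ : ℕ → ℕ → PL2)
    (a : ℕ → ℤ → ℂ) (b : ℕ → ℕ → ℤ → ℂ)
    (ha_per : ∀ j : ℕ, 1 ≤ j → ∀ n : ℤ, a (j+1) (n + 2^(j+1)) = a (j+1) n)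
    (hb_per : ∀ j : ℕ, ∀ m, 1 ≤ m → m ≤ ρ j → ∀ n : ℤ,
        b (j+1) m (n + 2^(j+1)) = b (j+1) m n)
    (href : ∀ j : ℕ, 1 ≤ j → ∀ n : ℤ,
        fCoeff (φ j) n = (Real.sqrt 2 : ℂ) * a (j+1) n * fCoeff (φ (j+1)) n)
    (hwav : ∀ j : ℕ, ∀ m, 1 ≤ m → m ≤ ρ j → ∀ n : ℤ,
        fCoeff (ψ j m) n = (Real.sqrt 2 : ℂ) * b (j+1) m n * fCoeff (φ (j+1)) n)
    (hframe : IsParsevalFrame ρ ψ) :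
    (∀ n : ℤ, Filter.Tendsto
        (fun j : ℕ => (2:ℝ)^j * ‖fCoeff (φ j) n‖^2 * theta ρ a b j n)
        Filter.atTop (nhds 1)) ∧
    (∀ j : ℕ, ∀ n : ℤ,
        (∃ k : ℤ, Odd k ∧ fCoeff (φ (j+1)) n ≠ 0 ∧ fCoeff (φ (j+1)) (2^j * k + n) ≠ 0) →
        ((theta ρ a b j n : ℝ) : ℂ) * conj (a (j+1) n) * a (j+1) (n + 2^j)
          + ∑ m ∈ Finset.Icc 1 (ρ j), conj (b (j+1) m n) * b (j+1) m (n + 2^j) = 0) :=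
  parseval_frame_necessity_fundamental_general ρ φ ψ a b ha_per hb_per href hwav hframe

end
end

section
/- Suppose functions φ_j ∈ L₂ (j ∈ ℕ) satisfy the refinement equation with masks â_{j+1} ∈ S(2^{j+1}), and for each j ∈ ℤ₊ the functions ψ^m_j ∈ L₂ (m = 1,…,ρ_j, ρ_j positive integers) are defined by the wavelet equation with masks b̂^m_{j+1} ∈ S(2^{j+1}); let θ_j be the fundamental coefficients. Then for every odd integer k, every n ∈ ℤ and every j ∈ ℤ₊, Σ_{q=0}^{j} 2^q Σ_{m=1}^{ρ_q} conj(ψ̂^m_q(n)) · ψ̂^m_q(2^j k + n) = 2^{j+1} · ( Σ_{m=1}^{ρ_j} conj(b̂^m_{j+1}(n)) · b̂^m_{j+1}(2^j + n) + θ_j(n) · conj(â_{j+1}(n)) · â_{j+1}(2^j + n) ) · conj(φ̂_{j+1}(n)) · φ̂_{j+1}(2^j k + n). -/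
open MeasureTheory Complex Finset Filter ComplexConjugate

noncomputable section

/-!
Through the wavelet and refinement equations every term factors over the correlation
`conj φ̂_{q+1}(n) · φ̂_{q+1}(N)`. If `N ≡ n (mod 2^j)`, the masks of the levels `q < j` are
evaluated at `n` itself, so the partial sum over `q < j` collapses, along the recursion
defining `θ`, to `2^j θ_j(n) conj φ̂_j(n) φ̂_j(N)`. For `N = 2^j k + n` with `k` odd one more
level is added, and its masks see `N` only modulo `2^{j+1}`, i.e. at `2^j + n`.
-/

open Function (Periodic)

lemma conj_sqrt_two_mul_mul (b₁ b₂ z₁ z₂ : ℂ) :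
    conj ((√2 : ℂ) * b₁ * z₁) * ((√2 : ℂ) * b₂ * z₂) = 2 * (conj b₁ * b₂) * (conj z₁ * z₂) := by
  have h : (√2 : ℂ) * (√2 : ℂ) = 2 := by norm_cast; simp
  simp only [map_mul, conj_ofReal]
  linear_combination (conj b₁ * b₂ * (conj z₁ * z₂)) * h

section Sequences

variable {ρ : ℕ → ℕ} {Φ : ℕ → ℤ → ℂ} {Ψ : ℕ → ℕ → ℤ → ℂ} {a : ℕ → ℤ → ℂ} {b : ℕ → ℕ → ℤ → ℂ}

lemma sum_conj_mul_of_wavelet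
    (hwav : ∀ j m, 1 ≤ m → m ≤ ρ j → ∀ n, Ψ j m n = (√2 : ℂ) * b (j+1) m n * Φ (j+1) n)
    (j : ℕ) (n N : ℤ) :
    ∑ m ∈ Icc 1 (ρ j), conj (Ψ j m n) * Ψ j m N
      = 2 * (∑ m ∈ Icc 1 (ρ j), conj (b (j+1) m n) * b (j+1) m N)
          * (conj (Φ (j+1) n) * Φ (j+1) N) := by
  rw [mul_sum, sum_mul]
  refine sum_congr rfl fun m hm => ?_
  obtain ⟨h₁, h₂⟩ := mem_Icc.1 hm
  rw [hwav j m h₁ h₂, hwav j m h₁ h₂, conj_sqrt_two_mul_mul]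

/-- At level `0` the refinement equation is not assumed, but there `θ₀ = 0`. -/
lemma theta_mul_conj_mul_of_refinement
    (href : ∀ j, 1 ≤ j → ∀ n, Φ j n = (√2 : ℂ) * a (j+1) n * Φ (j+1) n) (j : ℕ) (n N : ℤ) :
    (theta ρ a b j n : ℂ) * (conj (Φ j n) * Φ j N)
      = 2 * theta ρ a b j n * (conj (a (j+1) n) * a (j+1) N)
          * (conj (Φ (j+1) n) * Φ (j+1) N) := by
  rcases j with _ | j
  · simp [theta]
  · rw [href (j+1) j.succ_pos, href (j+1) j.succ_pos, conj_sqrt_two_mul_mul]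
    ring

lemma theta_mul_mask_add_mul (ha : ∀ j, 1 ≤ j → Periodic (a (j+1)) (2^(j+1)))
    (j : ℕ) (n N t : ℤ) :
    (theta ρ a b j n : ℂ) * a (j+1) (N + t * 2^(j+1)) = theta ρ a b j n * a (j+1) N := by
  rcases j with _ | j
  · simp [theta]
  · exact congrArg _ ((ha (j+1) j.succ_pos).int_mul t N)

lemma sum_conj_mask_add_mul
    (hb : ∀ j m, 1 ≤ m → m ≤ ρ j → Periodic (b (j+1) m) (2^(j+1))) (j : ℕ) (n N t : ℤ) :
    ∑ m ∈ Icc 1 (ρ j), conj (b (j+1) m n) * b (j+1) m (N + t * 2^(j+1))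
      = ∑ m ∈ Icc 1 (ρ j), conj (b (j+1) m n) * b (j+1) m N :=
  sum_congr rfl fun m hm =>
    congrArg _ ((hb j m (mem_Icc.1 hm).1 (mem_Icc.1 hm).2).int_mul t N)

lemma sum_range_succ_of_eq_theta
    (hwav : ∀ j m, 1 ≤ m → m ≤ ρ j → ∀ n, Ψ j m n = (√2 : ℂ) * b (j+1) m n * Φ (j+1) n)
    (href : ∀ j, 1 ≤ j → ∀ n, Φ j n = (√2 : ℂ) * a (j+1) n * Φ (j+1) n) {j : ℕ} {n N : ℤ}
    (hsum : ∑ q ∈ range j, (2:ℂ)^q * ∑ m ∈ Icc 1 (ρ q), conj (Ψ q m n) * Ψ q m N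
      = 2^j * (theta ρ a b j n * (conj (Φ j n) * Φ j N))) :
    ∑ q ∈ range (j+1), (2:ℂ)^q * ∑ m ∈ Icc 1 (ρ q), conj (Ψ q m n) * Ψ q m N
      = 2^(j+1) * ((∑ m ∈ Icc 1 (ρ j), conj (b (j+1) m n) * b (j+1) m N)
          + theta ρ a b j n * (conj (a (j+1) n) * a (j+1) N))
          * (conj (Φ (j+1) n) * Φ (j+1) N) := by
  rw [sum_range_succ, hsum, sum_conj_mul_of_wavelet hwav, theta_mul_conj_mul_of_refinement href]
  ring

lemma sum_range_eq_theta
    (ha : ∀ j, 1 ≤ j → Periodic (a (j+1)) (2^(j+1)))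
    (hb : ∀ j m, 1 ≤ m → m ≤ ρ j → Periodic (b (j+1) m) (2^(j+1)))
    (hwav : ∀ j m, 1 ≤ m → m ≤ ρ j → ∀ n, Ψ j m n = (√2 : ℂ) * b (j+1) m n * Φ (j+1) n)
    (href : ∀ j, 1 ≤ j → ∀ n, Φ j n = (√2 : ℂ) * a (j+1) n * Φ (j+1) n) (j : ℕ) (n t : ℤ) :
    ∑ q ∈ range j, (2:ℂ)^q * ∑ m ∈ Icc 1 (ρ q), conj (Ψ q m n) * Ψ q m (n + t * 2^j)
      = 2^j * (theta ρ a b j n * (conj (Φ j n) * Φ j (n + t * 2^j))) := by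
  induction j generalizing t with
  | zero => simp [theta]
  | succ j ih =>
    have hsum := ih (2 * t)
    rw [show 2 * t * 2^j = t * 2^(j+1) by ring] at hsum
    rw [sum_range_succ_of_eq_theta hwav href hsum, sum_conj_mask_add_mul hb,
      mul_left_comm (theta ρ a b j n : ℂ), theta_mul_mask_add_mul ha,
      mul_left_comm (conj (a (j+1) n))]
    simp only [theta, conj_mul']
    push_cast
    ring

end Sequences

theorem offdiagonal_sum_eq_mask_expression_general
    (ρ : ℕ → ℕ)
    (φ : ℕ → PL2) (ψ : ℕ → ℕ → PL2)
    (a : ℕ → ℤ → ℂ) (b : ℕ → ℕ → ℤ → ℂ)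
    (ha_per : ∀ j : ℕ, 1 ≤ j → ∀ n : ℤ, a (j+1) (n + 2^(j+1)) = a (j+1) n)
    (hb_per : ∀ j : ℕ, ∀ m, 1 ≤ m → m ≤ ρ j → ∀ n : ℤ,
        b (j+1) m (n + 2^(j+1)) = b (j+1) m n)
    (href : ∀ j : ℕ, 1 ≤ j → ∀ n : ℤ,
        fCoeff (φ j) n = (Real.sqrt 2 : ℂ) * a (j+1) n * fCoeff (φ (j+1)) n)
    (hwav : ∀ j : ℕ, ∀ m, 1 ≤ m → m ≤ ρ j → ∀ n : ℤ,
        fCoeff (ψ j m) n = (Real.sqrt 2 : ℂ) * b (j+1) m n * fCoeff (φ (j+1)) n) :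
    ∀ k : ℤ, Odd k → ∀ n : ℤ, ∀ j : ℕ,
      ∑ q ∈ Finset.range (j+1), (2:ℂ)^q *
          ∑ m ∈ Finset.Icc 1 (ρ q),
            conj (fCoeff (ψ q m) n) * fCoeff (ψ q m) (2^j * k + n)
        = (2:ℂ)^(j+1) *
            ((∑ m ∈ Finset.Icc 1 (ρ j), conj (b (j+1) m n) * b (j+1) m (2^j + n))
              + ((theta ρ a b j n : ℝ) : ℂ) * conj (a (j+1) n) * a (j+1) (2^j + n)) *
            conj (fCoeff (φ (j+1)) n) * fCoeff (φ (j+1)) (2^j * k + n) := by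
  intro k hk n j
  obtain ⟨t, rfl⟩ := hk
  have hsum := sum_range_eq_theta ha_per hb_per hwav href j n (2 * t + 1)
  rw [show 2^j * (2 * t + 1) + n = n + (2 * t + 1) * 2^j by ring,
    sum_range_succ_of_eq_theta hwav href hsum,
    show n + (2 * t + 1) * 2^j = (2^j + n) + t * 2^(j+1) by ring,
    sum_conj_mask_add_mul hb_per, mul_left_comm (theta ρ a b j n : ℂ),
    theta_mul_mask_add_mul ha_per]
  ring

theorem offdiagonal_sum_eq_mask_expression
    (ρ : ℕ → ℕ) (hρ : ∀ j, 0 < ρ j)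
    (φ : ℕ → PL2) (ψ : ℕ → ℕ → PL2)
    (a : ℕ → ℤ → ℂ) (b : ℕ → ℕ → ℤ → ℂ)
    (ha_per : ∀ j : ℕ, 1 ≤ j → ∀ n : ℤ, a (j+1) (n + 2^(j+1)) = a (j+1) n)
    (hb_per : ∀ j : ℕ, ∀ m, 1 ≤ m → m ≤ ρ j → ∀ n : ℤ,
        b (j+1) m (n + 2^(j+1)) = b (j+1) m n)
    (href : ∀ j : ℕ, 1 ≤ j → ∀ n : ℤ,
        fCoeff (φ j) n = (Real.sqrt 2 : ℂ) * a (j+1) n * fCoeff (φ (j+1)) n)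
    (hwav : ∀ j : ℕ, ∀ m, 1 ≤ m → m ≤ ρ j → ∀ n : ℤ,
        fCoeff (ψ j m) n = (Real.sqrt 2 : ℂ) * b (j+1) m n * fCoeff (φ (j+1)) n) :
    ∀ k : ℤ, Odd k → ∀ n : ℤ, ∀ j : ℕ,
      ∑ q ∈ Finset.range (j+1), (2:ℂ)^q *
          ∑ m ∈ Finset.Icc 1 (ρ q),
            conj (fCoeff (ψ q m) n) * fCoeff (ψ q m) (2^j * k + n)
        = (2:ℂ)^(j+1) *
            ((∑ m ∈ Finset.Icc 1 (ρ j), conj (b (j+1) m n) * b (j+1) m (2^j + n))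
              + ((theta ρ a b j n : ℝ) : ℂ) * conj (a (j+1) n) * a (j+1) (2^j + n)) *
            conj (fCoeff (φ (j+1)) n) * fCoeff (φ (j+1)) (2^j * k + n) :=
  offdiagonal_sum_eq_mask_expression_general ρ φ ψ a b ha_per hb_per href hwav

end
end
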